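/- arXiv:2203.04413 — 4 statements merged into one kernel-verified Lean document; each statement's English description precedes it below -/
import Mathlib

section
/- For an additive Gaussian noise model, the j-th component of the score s(x) = ∇ log p(x) equals s_j(x) = -(x_j - f_j(pa_j(x)))/σ_j² + Σ_{i ∈ children(j)} (∂f_i/∂x_j)(pa_i(x)) · (x_i - f_i(pa_i(x)))/σ_i². -/
/-!
Up to an additive constant, `L` is `-½ ∑ᵢ (rᵢ / σᵢ)²` with residuals `rᵢ y = yᵢ - fᵢ y`, so its
derivative in the direction `eⱼ` is `-∑ᵢ rᵢ / σᵢ² · (δᵢⱼ - ∂ⱼ fᵢ)`. Since `fᵢ` only depends on the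
coordinates in `pa i`, the partial derivative `∂ⱼ fᵢ` vanishes unless `j` is a parent of `i`.
-/

theorem fderiv_apply_eq_zero_of_dependsOn {𝕜 ι F : Type*} [NontriviallyNormedField 𝕜]
    [Fintype ι] [NormedAddCommGroup F] [NormedSpace 𝕜 F] {f : (ι → 𝕜) → F} {s : Set ι}
    (hf : DependsOn f s) {v : ι → 𝕜} (hv : ∀ i ∈ s, v i = 0) (x : ι → 𝕜) :
    fderiv 𝕜 f x v = 0 := by
  by_cases hfx : DifferentiableAt 𝕜 f x
  · have hline : (fun t : 𝕜 => f (x + t • v)) = fun _ => f x :=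
      funext fun t => hf fun i hi => by simp [hv i hi]
    rw [← hfx.lineDeriv_eq_fderiv, lineDeriv, hline, deriv_const]
  · rw [fderiv_zero_of_not_differentiableAt hfx, zero_apply]

theorem hasFDerivAt_neg_half_sum_sq_div {E ι : Type*} [NormedAddCommGroup E] [NormedSpace ℝ E]
    {s : Finset ι} {g : ι → E → ℝ} {g' : ι → E →L[ℝ] ℝ} {x : E} (σ : ι → ℝ)
    (hg : ∀ i ∈ s, HasFDerivAt (g i) (g' i) x) :
    HasFDerivAt (fun y => -(1 / 2) * ∑ i ∈ s, (g i y / σ i) ^ 2)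
      (-∑ i ∈ s, (g i x / σ i ^ 2) • g' i) x := by
  have hsq : ∀ i ∈ s, HasFDerivAt (fun y => (g i y / σ i) ^ 2)
      ((2 * (g i x / σ i ^ 2)) • g' i) x := by
    intro i hi
    simp only [div_eq_mul_inv]
    refine (((hg i hi).mul_const (σ i)⁻¹).pow 2).congr_fderiv ?_
    ext v
    simp only [Nat.add_one_sub_one, pow_one, nsmul_eq_mul, Nat.cast_ofNat, smul_apply, smul_eq_mul]
    ring
  refine ((HasFDerivAt.fun_sum hsq).const_mul (-(1 / 2 : ℝ))).congr_fderiv ?_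
  ext v
  simp only [one_div, neg_smul, neg_apply, smul_apply, sum_apply, smul_eq_mul, Finset.mul_sum,
    neg_inj]
  exact Finset.sum_congr rfl fun i _ => by ring

theorem score_additive_gaussian_general {d : ℕ}
    (pa : Fin d → Finset (Fin d)) (f : Fin d → (Fin d → ℝ) → ℝ)
    (σ : Fin d → ℝ)
    (hdep : ∀ i, ∀ x y : Fin d → ℝ, (∀ k ∈ pa i, x k = y k) → f i x = f i y)
    (hdiff : ∀ i, Differentiable ℝ (f i))
    (L : (Fin d → ℝ) → ℝ)
    (hL : ∀ x, L x = -(1 / 2) * ∑ i, ((x i - f i x) / σ i) ^ 2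
        - (1 / 2) * ∑ i, Real.log (2 * Real.pi * σ i ^ 2))
    (j : Fin d) (x : Fin d → ℝ) :
    fderiv ℝ L x (Pi.single j 1) =
      -((x j - f j x) / σ j ^ 2)
      + ∑ i ∈ Finset.univ.filter (fun i => j ∈ pa i),
          fderiv ℝ (f i) x (Pi.single j 1) * ((x i - f i x) / σ i ^ 2) := by
  have hres : ∀ i ∈ Finset.univ, HasFDerivAt (fun y : Fin d → ℝ => y i - f i y)
      (ContinuousLinearMap.proj i - fderiv ℝ (f i) x) x :=
    fun i _ => (hasFDerivAt_apply i x).sub (hdiff i x).hasFDerivAt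
  have hnonparent : ∀ i, j ∉ pa i → fderiv ℝ (f i) x (Pi.single j 1) = 0 :=
    fun i hji => fderiv_apply_eq_zero_of_dependsOn (fun y z h => hdep i y z h)
      (fun k hk => Pi.single_eq_of_ne (ne_of_mem_of_not_mem hk hji) 1) x
  rw [show L = _ from funext hL, ((hasFDerivAt_neg_half_sum_sq_div σ hres).sub_const _).fderiv,
    Finset.sum_filter_of_ne fun i _ h => by_contra fun hji => h (by rw [hnonparent i hji, zero_mul])]
  simp only [neg_apply, sum_apply, smul_apply, sub_apply, ContinuousLinearMap.proj_apply,
    Pi.single_apply, smul_eq_mul, mul_sub, mul_ite, mul_one, mul_zero, Finset.sum_sub_distrib,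
    Finset.sum_ite_eq', Finset.mem_univ, ↓reduceIte, neg_sub, mul_comm]
  ring

/-- score components of an additive Gaussian noise model. -/
theorem score_additive_gaussian {d : ℕ}
    (pa : Fin d → Finset (Fin d)) (f : Fin d → (Fin d → ℝ) → ℝ)
    (σ : Fin d → ℝ) (hσ : ∀ i, 0 < σ i)
    (hnotself : ∀ i, i ∉ pa i)
    (hdep : ∀ i, ∀ x y : Fin d → ℝ, (∀ k ∈ pa i, x k = y k) → f i x = f i y)
    (hdiff : ∀ i, Differentiable ℝ (f i))
    (L : (Fin d → ℝ) → ℝ)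
    (hL : ∀ x, L x = -(1 / 2) * ∑ i, ((x i - f i x) / σ i) ^ 2
        - (1 / 2) * ∑ i, Real.log (2 * Real.pi * σ i ^ 2))
    (j : Fin d) (x : Fin d → ℝ) :
    fderiv ℝ L x (Pi.single j 1) =
      -((x j - f j x) / σ j ^ 2)
      + ∑ i ∈ Finset.univ.filter (fun i => j ∈ pa i),
          fderiv ℝ (f i) x (Pi.single j 1) * ((x i - f i x) / σ i ^ 2) :=
  score_additive_gaussian_general pa f σ hdep hdiff L hL j x
end

section
/- In an additive Gaussian noise model, if j is a leaf of the causal DAG (has no children), then the partial derivative ∂s_j(x)/∂x_j = -1/σ_j² for all x; in particular Var_X[∂s_j(X)/∂x_j] = 0. -/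
/-!
A leaf `j` occurs in none of the sums of the score, so `s_j x = -(x_j - f_j x) / σ_j²`.
Since `j ∉ pa_j`, `f_j` is constant along the `j`-th coordinate axis, so only the `x_j` term
contributes to `∂s_j/∂x_j`.
-/

section CoordinateDerivative

variable {𝕜 ι F : Type*} [NontriviallyNormedField 𝕜] [Fintype ι] [DecidableEq ι]
  [NormedAddCommGroup F] [NormedSpace 𝕜 F]

theorem fderiv_apply_single_eq_zero_of_indep {f : (ι → 𝕜) → F} {j : ι}
    (hf : ∀ x y : ι → 𝕜, (∀ k, k ≠ j → x k = y k) → f x = f y) (x : ι → 𝕜) :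
    fderiv 𝕜 f x (Pi.single j 1) = 0 := by
  by_cases hfx : DifferentiableAt 𝕜 f x
  · have hline : (fun t : 𝕜 ↦ f (x + t • Pi.single j 1)) = fun _ ↦ f x := by
      funext t
      refine hf _ _ fun k hk ↦ ?_
      simp [Pi.single_eq_of_ne hk]
    rw [← hfx.lineDeriv_eq_fderiv, lineDeriv, hline, deriv_const]
  · rw [fderiv_zero_of_not_differentiableAt hfx, zero_apply]

theorem fderiv_neg_coord_sub_div_apply_single {g : (ι → 𝕜) → 𝕜} {x : ι → 𝕜}
    (hg : DifferentiableAt 𝕜 g x) (j : ι) (c : 𝕜) :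
    fderiv 𝕜 (fun y ↦ -((y j - g y) / c)) x (Pi.single j 1)
      = -((1 - fderiv 𝕜 g x (Pi.single j 1)) / c) := by
  have hproj : HasFDerivAt (fun y : ι → 𝕜 ↦ y j) (ContinuousLinearMap.proj j) x :=
    (ContinuousLinearMap.proj j : (ι → 𝕜) →L[𝕜] 𝕜).hasFDerivAt
  have hres := ((hproj.fun_sub hg.hasFDerivAt).mul_const c⁻¹).fun_neg
  simp only [← div_eq_mul_inv] at hres
  rw [hres.fderiv]
  simp [div_eq_inv_mul]

end CoordinateDerivative

theorem leaf_score_diag_const_general {d : ℕ}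
    (pa : Fin d → Finset (Fin d)) (f : Fin d → (Fin d → ℝ) → ℝ)
    (σ : Fin d → ℝ)
    (hnotself : ∀ i, i ∉ pa i)
    (hdep : ∀ i, ∀ x y : Fin d → ℝ, (∀ k ∈ pa i, x k = y k) → f i x = f i y)
    (hdiff : ∀ i, Differentiable ℝ (f i))
    (s : Fin d → (Fin d → ℝ) → ℝ)
    (hs : ∀ j x, s j x =
      -((x j - f j x) / σ j ^ 2)
      + ∑ i ∈ Finset.univ.filter (fun i => j ∈ pa i),
          fderiv ℝ (f i) x (Pi.single j 1) * ((x i - f i x) / σ i ^ 2))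
    (j : Fin d) (hleaf : ∀ i, j ∉ pa i) :
    ∀ x, fderiv ℝ (s j) x (Pi.single j 1) = -(1 / σ j ^ 2) := by
  intro x
  have hscore : s j = fun y ↦ -((y j - f j y) / σ j ^ 2) := by
    funext y
    simp [hs j y, hleaf]
  have hfj_indep : fderiv ℝ (f j) x (Pi.single j 1) = 0 :=
    fderiv_apply_single_eq_zero_of_indep
      (fun y z hyz ↦ hdep j y z fun k hk ↦ hyz k (ne_of_mem_of_not_mem hk (hnotself j))) x
  rw [hscore, fderiv_neg_coord_sub_div_apply_single (hdiff j x), hfj_indep, sub_zero]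

/-- if `j` is a leaf then `∂ s_j / ∂ x_j = -1/σ_j²` everywhere
(in particular the variance of `∂ s_j / ∂ x_j` is zero). -/
theorem leaf_score_diag_const {d : ℕ}
    (pa : Fin d → Finset (Fin d)) (f : Fin d → (Fin d → ℝ) → ℝ)
    (σ : Fin d → ℝ) (hσ : ∀ i, 0 < σ i)
    (hnotself : ∀ i, i ∉ pa i)
    (hdep : ∀ i, ∀ x y : Fin d → ℝ, (∀ k ∈ pa i, x k = y k) → f i x = f i y)
    (hdiff : ∀ i, Differentiable ℝ (f i))
    (s : Fin d → (Fin d → ℝ) → ℝ)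
    (hs : ∀ j x, s j x =
      -((x j - f j x) / σ j ^ 2)
      + ∑ i ∈ Finset.univ.filter (fun i => j ∈ pa i),
          fderiv ℝ (f i) x (Pi.single j 1) * ((x i - f i x) / σ i ^ 2))
    (j : Fin d) (hleaf : ∀ i, j ∉ pa i) :
    ∀ x, fderiv ℝ (s j) x (Pi.single j 1) = -(1 / σ j ^ 2) :=
  leaf_score_diag_const_general pa f σ hnotself hdep hdiff s hs j hleaf
end

section
/- In a nonlinear additive Gaussian noise model, if ∂s_j(x)/∂x_j is constant in x (equals some c ∈ R for all x), then node j is a leaf of the causal DAG. -/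
/-!
Take a child `i` of `j` that is last in the causal order among the children of `j`; then
`x_i` enters `s_j` only through the term of `i`, so `s_j` is affine in `x_i` with slope
`∂_j f_i / σ_i²`. It is also affine in `x_j` with the constant slope `c`, and since updates of
two different coordinates commute, the slope in `x_i` cannot depend on `x_j`. Hence `∂_j f_i`
is constant along every line in direction `j`, i.e. `f_i` is affine in `x_j`, contradicting
nonlinearity.
-/

open Function

theorem Pi.update_eq_self_add_single {ι G : Type*} [DecidableEq ι] [AddGroup G]
    (x : ι → G) (m : ι) (u : G) : update x m u = x + Pi.single m (-x m + u) := by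
  rw [Pi.update_eq_sub_add_single, Pi.single_add, Pi.single_neg, sub_eq_add_neg, add_assoc]

section Calculus

variable {ι E : Type*} [Fintype ι] [DecidableEq ι]
  [NormedAddCommGroup E] [NormedSpace ℝ E]

theorem eq_add_smul_of_hasDerivAt_const {H : ℝ → E} {b : E} (h : ∀ t, HasDerivAt H b t)
    (t t' : ℝ) : H t = H t' + (t - t') • b := by
  have hzero : ∀ u, HasDerivAt (fun t => H t - t • b) 0 u := fun u => by
    simpa using (h u).fun_sub ((hasDerivAt_id u).smul_const b)
  have := is_const_of_deriv_eq_zero (fun u => (hzero u).differentiableAt)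
    (fun u => (hzero u).deriv) t t'
  rw [sub_smul, ← sub_eq_zero]
  rw [← sub_eq_zero] at this
  rw [← this]; abel

theorem hasDerivAt_comp_update {F : (ι → ℝ) → E} (hF : Differentiable ℝ F)
    (x : ι → ℝ) (m : ι) (t : ℝ) :
    HasDerivAt (fun t => F (update x m t)) (fderiv ℝ F (update x m t) (Pi.single m 1)) t :=
  (hF _).hasFDerivAt.comp_hasDerivAt t (hasDerivAt_update x m t)

theorem apply_update_eq_add_smul_of_fderiv_single_eq {F : (ι → ℝ) → E}
    (hF : Differentiable ℝ F) {x : ι → ℝ} {m : ι} {b : E}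
    (h : ∀ t, fderiv ℝ F (update x m t) (Pi.single m 1) = b) (t t' : ℝ) :
    F (update x m t) = F (update x m t') + (t - t') • b :=
  eq_add_smul_of_hasDerivAt_const (fun t => h t ▸ hasDerivAt_comp_update hF x m t) t t'

theorem fderiv_update_of_apply_update_eq {F : (ι → ℝ) → E} {m : ι}
    (hF : ∀ z u, F (update z m u) = F z) (x : ι → ℝ) (u : ℝ) :
    fderiv ℝ F (update x m u) = fderiv ℝ F x := by
  have htrans : (fun z => F (z + Pi.single m (-x m + u))) = F := funext fun z => by
    rw [← hF z (z m + (-x m + u)), Pi.update_eq_self_add_single, neg_add_cancel_left]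
  rw [Pi.update_eq_self_add_single, ← fderiv_comp_add_right, htrans]

end Calculus

/-- A finite-difference form of the symmetry of mixed partial derivatives. -/
theorem slope_update_eq_of_const_slope {ι : Type*} [DecidableEq ι] {S g : (ι → ℝ) → ℝ}
    {m n : ι} (hmn : m ≠ n) {c : ℝ} (hm : ∀ x t, S (update x m t) = S x + c * (t - x m))
    (hn : ∀ y u, S (update y n u) = S y + g y * (u - y n)) (x : ι → ℝ) (t : ℝ) :
    g (update x m t) = g x := by
  have hg : ∀ y, g y = S (update y n (y n + 1)) - S y := fun y => by
    rw [hn]; ring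
  rw [hg, hg x, update_of_ne hmn.symm, update_comm hmn, hm, hm, update_of_ne hmn]
  ring

theorem apply_update_of_forall_mem_eq {ι α β : Type*} [DecidableEq ι] {F : (ι → α) → β}
    {P : Finset ι} (hP : ∀ x y, (∀ k ∈ P, x k = y k) → F x = F y) {i : ι} (hi : i ∉ P)
    (y : ι → α) (u : α) : F (update y i u) = F y :=
  hP _ _ fun _ hk => update_of_ne (ne_of_mem_of_not_mem hk hi) _ _

section Model

variable {ι : Type*} [Fintype ι] [DecidableEq ι] {pa : ι → Finset ι}
  {f : ι → (ι → ℝ) → ℝ} {σ : ι → ℝ} {s : ι → (ι → ℝ) → ℝ}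

theorem exists_child_not_mem_parents_of_siblings (ord : ι → ℕ)
    (hord : ∀ i, ∀ k ∈ pa i, ord k < ord i) {i₀ j : ι} (h : j ∈ pa i₀) :
    ∃ i, j ∈ pa i ∧ ∀ k, j ∈ pa k → i ∉ pa k := by
  obtain ⟨i, hi, hmax⟩ := Finset.exists_max_image
    (Finset.univ.filter (fun i => j ∈ pa i)) ord ⟨i₀, by simpa using h⟩
  refine ⟨i, by simpa using hi, fun k hk hik => ?_⟩
  exact (hmax k (by simpa using hk)).not_gt (hord k i hik)

def IsAdditiveNoiseScore (pa : ι → Finset ι) (f : ι → (ι → ℝ) → ℝ) (σ : ι → ℝ)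
    (s : ι → (ι → ℝ) → ℝ) : Prop :=
  ∀ j x, s j x = -((x j - f j x) / σ j ^ 2) +
    ∑ i ∈ Finset.univ.filter (fun i => j ∈ pa i),
      fderiv ℝ (f i) x (Pi.single j 1) * ((x i - f i x) / σ i ^ 2)

theorem IsAdditiveNoiseScore.differentiable (hs : IsAdditiveNoiseScore pa f σ s)
    (hdiff : ∀ i, ContDiff ℝ 2 (f i)) (j : ι) : Differentiable ℝ (s j) := by
  have hf : ∀ i, Differentiable ℝ (f i) := fun i => (hdiff i).differentiable (by norm_num)
  have hf' : ∀ i, Differentiable ℝ (fderiv ℝ (f i)) := fun i =>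
    ((hdiff i).fderiv_right (m := 1) (by norm_num)).differentiable (by norm_num)
  rw [funext (hs j)]
  fun_prop

theorem IsAdditiveNoiseScore.update_child (hs : IsAdditiveNoiseScore pa f σ s)
    (hdep : ∀ i, ∀ x y : ι → ℝ, (∀ k ∈ pa i, x k = y k) → f i x = f i y)
    {i j : ι} (hji : j ∈ pa i) (hpaj : i ∉ pa j) (hsib : ∀ k, j ∈ pa k → i ∉ pa k)
    (y : ι → ℝ) (u : ℝ) :
    s j (update y i u) = s j y + fderiv ℝ (f i) y (Pi.single j 1) / σ i ^ 2 * (u - y i) := by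
  have hij : i ≠ j := by rintro rfl; exact hsib _ hji hji
  have hindep : ∀ k, i ∉ pa k → ∀ z v, f k (update z i v) = f k z := fun k hik =>
    apply_update_of_forall_mem_eq (hdep k) hik
  have hterm : ∀ k ∈ Finset.univ.filter (fun k => j ∈ pa k),
      fderiv ℝ (f k) (update y i u) (Pi.single j 1) *
          ((update y i u k - f k (update y i u)) / σ k ^ 2) =
        fderiv ℝ (f k) y (Pi.single j 1) * ((y k - f k y) / σ k ^ 2) +
          if k = i then fderiv ℝ (f i) y (Pi.single j 1) / σ i ^ 2 * (u - y i) else 0 := by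
    intro k hk
    have hik := hsib k (by simpa using hk)
    rw [fderiv_update_of_apply_update_eq (hindep k hik), hindep k hik]
    rcases eq_or_ne k i with rfl | hki
    · simp only [update_self, if_true]
      ring
    · simp only [update_of_ne hki, hki, if_false, add_zero]
  rw [hs j, hs j, Finset.sum_congr rfl hterm, Finset.sum_add_distrib, Finset.sum_ite_eq',
    if_pos (by simpa using hji), update_of_ne hij.symm, hindep j hpaj]
  ring

end Model

theorem score_diag_const_implies_leaf_general {d : ℕ}
    (pa : Fin d → Finset (Fin d)) (f : Fin d → (Fin d → ℝ) → ℝ)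
    (σ : Fin d → ℝ) (hσ : ∀ i, 0 < σ i)
    (ord : Fin d → ℕ) (hord : ∀ i, ∀ k ∈ pa i, ord k < ord i)
    (hdep : ∀ i, ∀ x y : Fin d → ℝ, (∀ k ∈ pa i, x k = y k) → f i x = f i y)
    (hdiff : ∀ i, ContDiff ℝ 2 (f i))
    (hnonlin : ∀ i, ∀ k ∈ pa i, ∃ x : Fin d → ℝ,
      ¬ ∃ a b : ℝ, ∀ t : ℝ, f i (Function.update x k t) = a + b * t)
    (s : Fin d → (Fin d → ℝ) → ℝ)
    (hs : ∀ j x, s j x =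
      -((x j - f j x) / σ j ^ 2)
      + ∑ i ∈ Finset.univ.filter (fun i => j ∈ pa i),
          fderiv ℝ (f i) x (Pi.single j 1) * ((x i - f i x) / σ i ^ 2))
    (j : Fin d)
    (hconst : ∃ c : ℝ, ∀ x, fderiv ℝ (s j) x (Pi.single j 1) = c) :
    ∀ i, j ∉ pa i := by
  obtain ⟨c, hc⟩ := hconst
  intro i₀ hji₀
  obtain ⟨i, hji, hsib⟩ := exists_child_not_mem_parents_of_siblings ord hord hji₀
  have hij : i ≠ j := by rintro rfl; exact hsib _ hji hji
  have hpaj : i ∉ pa j := fun h => (hord j i h).not_gt (hord i j hji)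
  have hslope_j : ∀ x t, s j (update x j t) = s j x + c * (t - x j) := fun x t => by
    simpa [mul_comm] using apply_update_eq_add_smul_of_fderiv_single_eq (x := x)
      (IsAdditiveNoiseScore.differentiable hs hdiff j) (fun _ => hc _) t (x j)
  obtain ⟨x₀, hx₀⟩ := hnonlin i j hji
  have hpartial_const : ∀ t, fderiv ℝ (f i) (update x₀ j t) (Pi.single j 1) =
      fderiv ℝ (f i) x₀ (Pi.single j 1) := fun t =>
    (div_left_inj' (pow_pos (hσ i) 2).ne').mp <| slope_update_eq_of_const_slope hij.symm
      hslope_j (IsAdditiveNoiseScore.update_child hs hdep hji hpaj hsib) x₀ t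
  refine hx₀ ⟨f i x₀ - fderiv ℝ (f i) x₀ (Pi.single j 1) * x₀ j,
    fderiv ℝ (f i) x₀ (Pi.single j 1), fun t => ?_⟩
  have := apply_update_eq_add_smul_of_fderiv_single_eq
    ((hdiff i).differentiable (by norm_num)) hpartial_const t (x₀ j)
  rw [update_eq_self, smul_eq_mul] at this
  rw [this]
  ring

/-- in a nonlinear additive Gaussian noise model, if the diagonal
entry `∂ s_j / ∂ x_j` of the score's Jacobian is constant in `x`, then `j` is a
leaf of the causal DAG. -/
theorem score_diag_const_implies_leaf {d : ℕ}
    (pa : Fin d → Finset (Fin d)) (f : Fin d → (Fin d → ℝ) → ℝ)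
    (σ : Fin d → ℝ) (hσ : ∀ i, 0 < σ i)
    (hnotself : ∀ i, i ∉ pa i)
    (ord : Fin d → ℕ) (hord : ∀ i, ∀ k ∈ pa i, ord k < ord i)
    (hdep : ∀ i, ∀ x y : Fin d → ℝ, (∀ k ∈ pa i, x k = y k) → f i x = f i y)
    (hdiff : ∀ i, ContDiff ℝ 2 (f i))
    (hnonlin : ∀ i, ∀ k ∈ pa i, ∃ x : Fin d → ℝ,
      ¬ ∃ a b : ℝ, ∀ t : ℝ, f i (Function.update x k t) = a + b * t)
    (s : Fin d → (Fin d → ℝ) → ℝ)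
    (hs : ∀ j x, s j x =
      -((x j - f j x) / σ j ^ 2)
      + ∑ i ∈ Finset.univ.filter (fun i => j ∈ pa i),
          fderiv ℝ (f i) x (Pi.single j 1) * ((x i - f i x) / σ i ^ 2))
    (j : Fin d)
    (hconst : ∃ c : ℝ, ∀ x, fderiv ℝ (s j) x (Pi.single j 1) = c) :
    ∀ i, j ∉ pa i :=
  score_diag_const_implies_leaf_general pa f σ hσ ord hord hdep hdiff hnonlin s hs j hconst
end

section
/- (Score decomposition for general additive noise) If X ∈ R^d is generated by X_i = f_i(pa_i(X)) + ε_i with ε_i i.i.d. with smooth density p^ε, then the score of X satisfies s_j(x) = (d log p^ε/dx)(x_j − f_j(pa_j(x))) − Σ_{i ∈ children(j)} (∂f_i/∂x_j)(pa_i(x)) · (d log p^ε/dx)(x_i − f_i(pa_i(x))). -/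
/-- If `f` only depends on coordinates in `pa` and `j ∉ pa`, the partial
derivative of `f` in direction `j` vanishes. -/
lemma aux_fderiv_zero {d : ℕ} (pa : Finset (Fin d)) (f : (Fin d → ℝ) → ℝ)
    (hdep : ∀ x y : Fin d → ℝ, (∀ k ∈ pa, x k = y k) → f x = f y)
    (hdiff : Differentiable ℝ f) (j : Fin d) (hj : j ∉ pa) (x : Fin d → ℝ) :
    fderiv ℝ f x (Pi.single j 1) = 0 := by
  have hconst : ∀ t : ℝ, f (x + t • (Pi.single j 1 : Fin d → ℝ)) = f x := by
    intro t
    refine hdep _ _ fun k hk => ?_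
    have hkj : k ≠ j := fun h => hj (h ▸ hk)
    simp [Pi.single_apply, hkj]
  have h1 : HasDerivAt (fun t : ℝ => x + t • (Pi.single j 1 : Fin d → ℝ)) (Pi.single j 1) 0 := by
    simpa using ((hasDerivAt_id (0 : ℝ)).smul_const (Pi.single j 1)).const_add x
  have h2 : HasDerivAt (fun t : ℝ => f (x + t • (Pi.single j 1 : Fin d → ℝ)))
      (fderiv ℝ f x (Pi.single j 1)) 0 := by
    have hx : HasFDerivAt f (fderiv ℝ f x)
        (x + (0 : ℝ) • (Pi.single j 1 : Fin d → ℝ)) := by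
      simpa using (hdiff x).hasFDerivAt
    have := hx.comp_hasDerivAt 0 h1
    exact this
  have h3 : HasDerivAt (fun _ : ℝ => f x) (fderiv ℝ f x (Pi.single j 1)) 0 := by
    have : (fun t : ℝ => f (x + t • (Pi.single j 1 : Fin d → ℝ))) = fun _ => f x := funext hconst
    rwa [this] at h2
  exact h3.unique (hasDerivAt_const 0 (f x))

/-- Lemma 2: score decomposition for general additive noise
models. -/
theorem score_additive_noise {d : ℕ}
    (pa : Fin d → Finset (Fin d)) (f : Fin d → (Fin d → ℝ) → ℝ)
    (hnotself : ∀ i, i ∉ pa i)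
    (hdep : ∀ i, ∀ x y : Fin d → ℝ, (∀ k ∈ pa i, x k = y k) → f i x = f i y)
    (hdiff : ∀ i, Differentiable ℝ (f i))
    (pε : ℝ → ℝ) (hpε_pos : ∀ t, 0 < pε t) (hpε : ContDiff ℝ (⊤ : ℕ∞) pε)
    (L : (Fin d → ℝ) → ℝ)
    (hL : ∀ x, L x = ∑ i, Real.log (pε (x i - f i x)))
    (j : Fin d) (x : Fin d → ℝ) :
    fderiv ℝ L x (Pi.single j 1) =
      deriv (fun t => Real.log (pε t)) (x j - f j x)
      - ∑ i ∈ Finset.univ.filter (fun i => j ∈ pa i),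
          fderiv ℝ (f i) x (Pi.single j 1) *
            deriv (fun t => Real.log (pε t)) (x i - f i x) := by
  set c : Fin d → ℝ := fun i => deriv (fun t => Real.log (pε t)) (x i - f i x) with hc
  have hlog : ∀ u : ℝ, HasDerivAt (fun t => Real.log (pε t))
      (deriv (fun t => Real.log (pε t)) u) u := fun u =>
    (DifferentiableAt.log (hpε.differentiable (by simp) u) (hpε_pos u).ne').hasDerivAt
  have key : ∀ i : Fin d, HasFDerivAt (fun y : Fin d → ℝ => Real.log (pε (y i - f i y)))
      (c i • ((ContinuousLinearMap.proj i : (Fin d → ℝ) →L[ℝ] ℝ) - fderiv ℝ (f i) x)) x := by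
    intro i
    have hu : HasFDerivAt (fun y : Fin d → ℝ => y i - f i y)
        ((ContinuousLinearMap.proj i : (Fin d → ℝ) →L[ℝ] ℝ) - fderiv ℝ (f i) x) x :=
      (ContinuousLinearMap.proj i).hasFDerivAt.sub (hdiff i x).hasFDerivAt
    exact (hlog (x i - f i x)).comp_hasFDerivAt x hu
  have hLd : HasFDerivAt L
      (∑ i, c i • ((ContinuousLinearMap.proj i : (Fin d → ℝ) →L[ℝ] ℝ) - fderiv ℝ (f i) x)) x := by
    have : L = fun y => ∑ i, Real.log (pε (y i - f i y)) := funext hL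
    rw [this]
    exact HasFDerivAt.fun_sum fun i _ => key i
  rw [hLd.fderiv]
  have expand : (∑ i, c i • ((ContinuousLinearMap.proj i : (Fin d → ℝ) →L[ℝ] ℝ)
      - fderiv ℝ (f i) x)) (Pi.single j 1)
      = ∑ i, c i * ((Pi.single j 1 : Fin d → ℝ) i - fderiv ℝ (f i) x (Pi.single j 1)) := by
    simp [ContinuousLinearMap.sum_apply, smul_eq_mul]
  rw [expand]
  have split : ∑ i, c i * ((Pi.single j 1 : Fin d → ℝ) i - fderiv ℝ (f i) x (Pi.single j 1))
      = (∑ i, c i * (Pi.single j 1 : Fin d → ℝ) i) - ∑ i, c i * fderiv ℝ (f i) x (Pi.single j 1) := by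
    rw [← Finset.sum_sub_distrib]
    congr 1; funext i; ring
  rw [split]
  have h1 : (∑ i, c i * (Pi.single j 1 : Fin d → ℝ) i) = c j := by
    simp [Pi.single_apply, mul_ite]
  have h2 : ∑ i, c i * fderiv ℝ (f i) x (Pi.single j 1)
      = ∑ i ∈ Finset.univ.filter (fun i => j ∈ pa i),
          fderiv ℝ (f i) x (Pi.single j 1) * c i := by
    rw [← Finset.sum_filter_of_ne (p := fun i => j ∈ pa i)
      (f := fun i => c i * fderiv ℝ (f i) x (Pi.single j 1))]
    · exact Finset.sum_congr rfl fun i _ => mul_comm _ _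
    · intro i _ h
      by_contra hjpa
      exact h (by rw [aux_fderiv_zero (pa i) (f i) (hdep i) (hdiff i) j hjpa x, mul_zero])
  rw [h1, h2]
end
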